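/- arXiv:2306.13403 — 2 statements merged into one kernel-verified Lean document; each statement's English description precedes it below -/
import Mathlib

section
/- There is δ₀ > 0 such that the following is true. Suppose that G is an abelian group, X is a random variable taking values in a finite subset of G, and x₀ ∈ G is a value such that P(X = x₀) ≥ 1 − δ₀. Then H(X) ≤ 2 d_ent(X, X). -/
/-!
Write `δ = 1 - P(X = x₀)` and `S = H(X) - η(1 - δ)`, `η t = -t log t`, for the entropy carried
by the values other than `x₀`; then `H(X) ≤ δ + S` and `S ≥ η(δ) ≥ 16 δ`. For `x ≠ 0` the event
`X₁ - X₂ = x` contains `(X₁, X₂) = (x₀ + x, x₀)` and `(x₀, x₀ - x)`, so its probability is at least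
`(1 - δ)(P(X = x₀ + x) + P(X = x₀ - x))`, and at most `2δ`, where `η` is increasing. Since `η` is
superadditive up to an error `a + b`, the nonzero values of `X₁ - X₂` carry entropy at least
`2(1 - δ)S - 2δ`: the tail of `X` is counted twice. This gives `3 H(X) ≤ 2 H(X₁ - X₂)`.
-/

open Finset

noncomputable section

/-- `IsPMF p`: the finitely supported function `p` is a probability mass function,
modelling the distribution of a random variable taking values in a finite subset. -/
def IsPMF {G : Type*} (p : G →₀ ℝ) : Prop :=
  (∀ x, 0 ≤ p x) ∧ ∑ x ∈ p.support, p x = 1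

/-- Shannon entropy `H(X)` of a random variable with distribution `p`. -/
def ent {G : Type*} (p : G →₀ ℝ) : ℝ :=
  ∑ x ∈ p.support, Real.negMulLog (p x)

/-- The joint distribution of a pair of independent random variables with
distributions `p` and `q`. -/
def prodPMF {G H : Type*} (p : G →₀ ℝ) (q : H →₀ ℝ) : (G × H) →₀ ℝ :=
  Finsupp.onFinset (p.support ×ˢ q.support) (fun z => p z.1 * q z.2)
    (fun _z hz => Finset.mem_product.2
      ⟨Finsupp.mem_support_iff.2 (left_ne_zero_of_mul hz),
       Finsupp.mem_support_iff.2 (right_ne_zero_of_mul hz)⟩)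

/-- The distribution of `X - Y`, where `X, Y` are independent with distributions `p, q`. -/
def subDist {G : Type*} [AddCommGroup G] (p q : G →₀ ℝ) : G →₀ ℝ :=
  Finsupp.mapDomain (fun z : G × G => z.1 - z.2) (prodPMF p q)

/-- The distribution of `X + Y`, where `X, Y` are independent with distributions `p, q`. -/
def sumDist {G : Type*} [AddCommGroup G] (p q : G →₀ ℝ) : G →₀ ℝ :=
  Finsupp.mapDomain (fun z : G × G => z.1 + z.2) (prodPMF p q)

/-- The entropic Ruzsa distance `d_ent(X, Y) = H(X' - Y') - H(X)/2 - H(Y)/2`,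
where `X', Y'` are independent copies of `X ~ p`, `Y ~ q`. -/
def dEnt {G : Type*} [AddCommGroup G] (p q : G →₀ ℝ) : ℝ :=
  ent (subDist p q) - ent p / 2 - ent q / 2

/-- The entropic doubling constant `σ_ent[X] = exp(H(X₁ + X₂) - H(X))`
for independent copies `X₁, X₂` of `X ~ p`. -/
def sigmaEnt {G : Type*} [AddCommGroup G] (p : G →₀ ℝ) : ℝ :=
  Real.exp (ent (sumDist p p) - ent p)

/-- First marginal of a joint distribution on `G × H`. -/
def fstMarg {G H : Type*} (w : (G × H) →₀ ℝ) : G →₀ ℝ :=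
  Finsupp.mapDomain Prod.fst w

/-- Second marginal of a joint distribution on `G × H`. -/
def sndMarg {G H : Type*} (w : (G × H) →₀ ℝ) : H →₀ ℝ :=
  Finsupp.mapDomain Prod.snd w

/-- The maximal entropic Ruzsa distance `d*_ent(X, Y)`: the supremum of
`H(X' - Y') - H(X)/2 - H(Y)/2` over all couplings `(X', Y')` of `X ~ p` and `Y ~ q`. -/
def dEntStar {G : Type*} [AddCommGroup G] (p q : G →₀ ℝ) : ℝ :=
  sSup { d : ℝ | ∃ w : (G × G) →₀ ℝ, IsPMF w ∧ fstMarg w = p ∧ sndMarg w = q ∧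
    d = ent (Finsupp.mapDomain (fun z : G × G => z.1 - z.2) w) - ent p / 2 - ent q / 2 }

/-- The uniform distribution on a finite set `A`. -/
def unif {G : Type*} [DecidableEq G] (A : Finset G) : G →₀ ℝ :=
  Finsupp.onFinset A (fun x => if x ∈ A then ((A.card : ℝ))⁻¹ else 0)
    (fun x hx => by by_contra h; exact hx (if_neg h))

/-- The distribution of `X` conditioned on the event `π(X) = y`, where `X ~ p`. -/
def condFiber {G H : Type*} [DecidableEq H] (π : G → H) (y : H) (p : G →₀ ℝ) : G →₀ ℝ :=
  Finsupp.onFinset p.support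
    (fun x => if π x = y then p x / (Finsupp.mapDomain π p) y else 0)
    (fun x hx => Finsupp.mem_support_iff.2 (fun h0 => hx (by simp [h0])))

/-- The entropy `h(p)` of the Bernoulli distribution with parameter `p`. -/
def binEnt (p : ℝ) : ℝ := Real.negMulLog p + Real.negMulLog (1 - p)

/-- Skew-dimension bound: `skewDimLE A r` means the skew-dimension of `A ⊆ ℤ^D`
is at most `r`. -/
def skewDimLE {D : ℕ} : Finset (Fin D → ℤ) → ℕ → Prop
  | A, 0 => A.card ≤ 1
  | A, r + 1 => A.card ≤ 1 ∨ ∃ i : Fin D, ∀ n : ℤ,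
      skewDimLE (A.filter fun v => v i = n) r

/-- The (affine) dimension of a finite subset `A ⊆ ℤ^D`: the dimension of the
real span of `A - A`. -/
def dimAff {D : ℕ} (A : Finset (Fin D → ℤ)) : ℕ :=
  Module.finrank ℝ (Submodule.span ℝ
    { x : Fin D → ℝ | ∃ a ∈ A, ∃ b ∈ A, x = fun i => ((a i : ℝ) - (b i : ℝ)) })



open Real

namespace Real

lemma mul_log_div_le {s t : ℝ} (hs : 0 < s) (ht : 0 < t) : s * log (t / s) ≤ t - s :=
  calc s * log (t / s) ≤ s * (t / s - 1) :=
        mul_le_mul_of_nonneg_left (log_le_sub_one_of_pos (div_pos ht hs)) hs.le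
    _ = t - s := by field_simp

lemma negMulLog_le_negMulLog {s t : ℝ} (hs : 0 ≤ s) (hst : s ≤ t) (ht : t ≤ exp (-1)) :
    negMulLog s ≤ negMulLog t := by
  rcases hs.eq_or_lt with rfl | hs
  · simpa using negMulLog_nonneg hst (ht.trans (exp_le_one_iff.2 (by norm_num)))
  have ht₀ : 0 < t := hs.trans_le hst
  have hlog : log t ≤ -1 := (log_le_iff_le_exp ht₀).2 ht
  have h := mul_log_div_le hs ht₀
  rw [log_div ht₀.ne' hs.ne'] at h
  simp only [negMulLog]
  nlinarith [mul_nonneg (sub_nonneg.2 hst) (neg_nonneg.2 (by linarith : log t + 1 ≤ 0))]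

lemma negMulLog_add_le {a b : ℝ} (ha : 0 ≤ a) (hb : 0 ≤ b) :
    negMulLog a + negMulLog b ≤ negMulLog (a + b) + (a + b) := by
  rcases ha.eq_or_lt with rfl | ha
  · simp; linarith
  rcases hb.eq_or_lt with rfl | hb
  · simp; linarith
  have hab := add_pos ha hb
  have h₁ := mul_log_div_le ha hab
  have h₂ := mul_log_div_le hb hab
  rw [log_div hab.ne' ha.ne'] at h₁
  rw [log_div hab.ne' hb.ne'] at h₂
  simp only [negMulLog]
  linear_combination h₁ + h₂

lemma mul_le_negMulLog {L t : ℝ} (ht : 0 ≤ t) (htL : t ≤ exp (-L)) : L * t ≤ negMulLog t := by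
  rcases ht.eq_or_lt with rfl | ht
  · simp
  have hlog : log t ≤ -L := (log_le_iff_le_exp ht).2 htL
  simp only [negMulLog]
  nlinarith

lemma negMulLog_sum_le {ι : Type*} {s : Finset ι} {w : ι → ℝ} (hw : ∀ i ∈ s, 0 ≤ w i) :
    negMulLog (∑ i ∈ s, w i) ≤ ∑ i ∈ s, negMulLog (w i) := by
  have hterm : ∀ i ∈ s, -w i * log (∑ j ∈ s, w j) ≤ negMulLog (w i) := by
    intro i hi
    rcases (hw i hi).eq_or_lt with h | h
    · simp [← h]
    · have := log_le_log h (Finset.single_le_sum hw hi)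
      simp only [negMulLog]
      nlinarith
  calc negMulLog (∑ i ∈ s, w i) = ∑ i ∈ s, -w i * log (∑ j ∈ s, w j) := by
        rw [negMulLog, ← Finset.sum_mul, Finset.sum_neg_distrib]
    _ ≤ _ := Finset.sum_le_sum hterm

lemma sub_le_negMulLog_of_mul_add_mul_le {a b c r : ℝ} (ha : 0 ≤ a) (hb : 0 ≤ b)
    (hc₀ : 0 ≤ c) (hc₁ : c ≤ 1) (hr : a * c + c * b ≤ r) (hr₁ : r ≤ exp (-1)) :
    c * (negMulLog a + negMulLog b) - (a + b) ≤ negMulLog r := by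
  have hc := negMulLog_nonneg hc₀ hc₁
  have h₁ : c * negMulLog a ≤ negMulLog (a * c) := by
    rw [negMulLog_mul]; nlinarith
  have h₂ : c * negMulLog b ≤ negMulLog (c * b) := by
    rw [negMulLog_mul]; nlinarith
  have h₃ := negMulLog_add_le (mul_nonneg ha hc₀) (mul_nonneg hc₀ hb)
  have h₄ := negMulLog_le_negMulLog (by positivity) hr hr₁
  nlinarith

end Real

section Entropy

variable {G : Type*} {p : G →₀ ℝ}

lemma ent_eq_sum_of_support_subset {s : Finset G} (hs : p.support ⊆ s) :
    ent p = ∑ x ∈ s, negMulLog (p x) :=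
  Finset.sum_subset hs fun x _ hx => by simp [Finsupp.notMem_support_iff.1 hx]

lemma sum_support_eq_add_sum_erase [DecidableEq G] {f : ℝ → ℝ} (hf : f 0 = 0) (x₀ : G) :
    ∑ x ∈ p.support, f (p x) = f (p x₀) + ∑ x ∈ p.support.erase x₀, f (p x) := by
  by_cases hx₀ : x₀ ∈ p.support
  · exact (Finset.add_sum_erase _ _ hx₀).symm
  · rw [Finsupp.notMem_support_iff.1 hx₀, hf, zero_add, Finset.erase_eq_of_notMem hx₀]

lemma IsPMF.sum_le_one (hp : IsPMF p) (s : Finset G) : ∑ x ∈ s, p x ≤ 1 := by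
  classical
  calc ∑ x ∈ s, p x ≤ ∑ x ∈ s ∪ p.support, p x :=
        Finset.sum_le_sum_of_subset_of_nonneg Finset.subset_union_left fun x _ _ => hp.1 x
    _ = 1 := by
        rw [← hp.2]
        exact (Finset.sum_subset Finset.subset_union_right
          fun x _ hx => Finsupp.notMem_support_iff.1 hx).symm

lemma IsPMF.le_one (hp : IsPMF p) (x : G) : p x ≤ 1 := by
  simpa using hp.sum_le_one {x}

lemma IsPMF.sum_le_one_sub [DecidableEq G] (hp : IsPMF p) {s : Finset G} {x₀ : G}
    (hx₀ : x₀ ∉ s) : ∑ x ∈ s, p x ≤ 1 - p x₀ := by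
  have := hp.sum_le_one (insert x₀ s)
  rw [Finset.sum_insert hx₀] at this
  linarith

lemma IsPMF.sum_negMulLog_le_ent (hp : IsPMF p) (s : Finset G) :
    ∑ x ∈ s, negMulLog (p x) ≤ ent p := by
  classical
  rw [ent_eq_sum_of_support_subset (Finset.subset_union_right (s₁ := s))]
  exact Finset.sum_le_sum_of_subset_of_nonneg Finset.subset_union_left
    fun x _ _ => negMulLog_nonneg (hp.1 x) (hp.le_one x)

lemma IsPMF.negMulLog_one_sub_le_ent_sub (hp : IsPMF p) (x₀ : G) :
    negMulLog (1 - p x₀) ≤ ent p - negMulLog (p x₀) := by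
  classical
  have hmass := sum_support_eq_add_sum_erase (p := p) (f := id) rfl x₀
  have hent := sum_support_eq_add_sum_erase (p := p) negMulLog_zero x₀
  simp only [id, hp.2] at hmass
  rw [ent, hent, show 1 - p x₀ = ∑ x ∈ p.support.erase x₀, p x by linarith]
  simpa using negMulLog_sum_le fun x _ => hp.1 x

lemma IsPMF.ent_sub_negMulLog_le_sum [DecidableEq G] (hp : IsPMF p) {x₀ : G} {T : Finset G}
    (hT : p.support.erase x₀ ⊆ T) : ent p - negMulLog (p x₀) ≤ ∑ y ∈ T, negMulLog (p y) := by
  rw [ent, sum_support_eq_add_sum_erase negMulLog_zero x₀, add_sub_cancel_left]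
  exact Finset.sum_le_sum_of_subset_of_nonneg hT
    fun x _ _ => negMulLog_nonneg (hp.1 x) (hp.le_one x)

end Entropy

section SubDist

variable {G : Type*} [AddCommGroup G] {p q : G →₀ ℝ}

lemma subDist_apply_eq_sum {s : Finset G} (hs : p.support ⊆ s) (x : G) :
    subDist p q x = ∑ a ∈ s, p a * q (a - x) := by
  classical
  rw [subDist, Finsupp.mapDomain, Finsupp.sum_apply, prodPMF,
    Finsupp.onFinset_sum _ fun _ => by simp, Finset.sum_product]
  rw [← Finset.sum_subset hs fun a _ ha => by simp [Finsupp.notMem_support_iff.1 ha]]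
  refine Finset.sum_congr rfl fun a _ => ?_
  simp only [Finsupp.single_apply, sub_eq_iff_comm (a := a), Finset.sum_ite_eq]
  split_ifs with ha
  · rfl
  · rw [Finsupp.notMem_support_iff.1 ha, mul_zero]

lemma isPMF_subDist (hp : IsPMF p) (hq : IsPMF q) : IsPMF (subDist p q) := by
  classical
  refine ⟨fun x => ?_, ?_⟩
  · rw [subDist_apply_eq_sum subset_rfl]
    exact Finset.sum_nonneg fun a _ => mul_nonneg (hp.1 a) (hq.1 _)
  · have h : (subDist p q).sum (fun _ m => m) = (prodPMF p q).sum (fun _ m => m) :=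
      Finsupp.sum_mapDomain_index (fun _ => rfl) fun _ _ _ => rfl
    rwa [prodPMF, Finsupp.onFinset_sum _ fun _ => rfl, Finset.sum_product,
      ← Finset.sum_mul_sum, hp.2, hq.2, one_mul] at h

lemma mul_le_subDist_apply (hp : ∀ x, 0 ≤ p x) (hq : ∀ x, 0 ≤ q x) (a x : G) :
    p a * q (a - x) ≤ subDist p q x := by
  classical
  rw [subDist_apply_eq_sum (Finset.subset_insert a p.support)]
  exact Finset.single_le_sum (f := fun b => p b * q (b - x))
    (fun b _ => mul_nonneg (hp b) (hq _)) (Finset.mem_insert_self a _)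

lemma add_le_subDist_apply (hp : ∀ x, 0 ≤ p x) (hq : ∀ x, 0 ≤ q x) {x : G} (hx : x ≠ 0)
    (x₀ : G) : p (x₀ + x) * q x₀ + p x₀ * q (x₀ - x) ≤ subDist p q x := by
  classical
  rw [subDist_apply_eq_sum
    ((Finset.subset_insert x₀ p.support).trans (Finset.subset_insert (x₀ + x) _))]
  have h := Finset.add_le_sum (f := fun a => p a * q (a - x))
    (fun b _ => mul_nonneg (hp b) (hq _)) (Finset.mem_insert_self (x₀ + x) _)
    (Finset.mem_insert_of_mem (Finset.mem_insert_self x₀ p.support))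
    (by simpa using hx)
  simpa using h

lemma IsPMF.subDist_apply_le_one_sub (hp : IsPMF p) (hq : IsPMF q) {x : G} (hx : x ≠ 0)
    (x₀ : G) : subDist p q x ≤ 1 - p x₀ * q x₀ := by
  classical
  have h := (isPMF_subDist hp hq).sum_le_one {x, 0}
  rw [Finset.sum_pair hx] at h
  have h₀ := mul_le_subDist_apply hp.1 hq.1 x₀ 0
  rw [sub_zero] at h₀
  linarith

end SubDist

lemma IsPMF.le_ent_subDist_self {G : Type*} [AddCommGroup G] {p : G →₀ ℝ} (hp : IsPMF p)
    (x₀ : G) (hx₀ : 2 * (1 - p x₀) ≤ exp (-1)) :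
    2 * p x₀ * (ent p - negMulLog (p x₀)) - 2 * (1 - p x₀) ≤ ent (subDist p p) := by
  classical
  set c := p x₀
  set U := p.support.erase x₀
  set V := U.image (· - x₀) ∪ U.image (x₀ - ·)
  have h0V : (0 : G) ∉ V := by simp [V, U, sub_eq_zero, eq_comm]
  have hpoint : ∀ x ∈ V, c * (negMulLog (p (x₀ + x)) + negMulLog (p (x₀ - x)))
      - (p (x₀ + x) + p (x₀ - x)) ≤ negMulLog (subDist p p x) := by
    intro x hx
    have hx0 : x ≠ 0 := ne_of_mem_of_not_mem hx h0V
    refine sub_le_negMulLog_of_mul_add_mul_le (hp.1 _) (hp.1 _) (hp.1 _) (hp.le_one _)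
      (add_le_subDist_apply hp.1 hp.1 hx0 x₀) ?_
    calc subDist p p x ≤ 1 - c * c := hp.subDist_apply_le_one_sub hp hx0 x₀
      _ ≤ 2 * (1 - c) := by nlinarith [hp.1 x₀, hp.le_one x₀]
      _ ≤ exp (-1) := hx₀
  have hinj₁ : Set.InjOn (x₀ + ·) V := fun a _ b _ h => add_left_cancel h
  have hinj₂ : Set.InjOn (x₀ - ·) V := fun a _ b _ h => sub_right_injective h
  have hU₁ : U ⊆ V.image (x₀ + ·) := fun y hy =>
    Finset.mem_image.2 ⟨y - x₀, by simp [V, hy], by abel⟩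
  have hU₂ : U ⊆ V.image (x₀ - ·) := fun y hy =>
    Finset.mem_image.2 ⟨x₀ - y, by simp [V, hy], by abel⟩
  have hx₀₁ : x₀ ∉ V.image (x₀ + ·) := by simpa using h0V
  have hx₀₂ : x₀ ∉ V.image (x₀ - ·) := by simpa [sub_eq_self] using h0V
  have hS₁ := hp.ent_sub_negMulLog_le_sum hU₁
  have hS₂ := hp.ent_sub_negMulLog_le_sum hU₂
  have hm₁ := hp.sum_le_one_sub hx₀₁
  have hm₂ := hp.sum_le_one_sub hx₀₂
  rw [Finset.sum_image hinj₁] at hS₁ hm₁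
  rw [Finset.sum_image hinj₂] at hS₂ hm₂
  calc 2 * c * (ent p - negMulLog c) - 2 * (1 - c)
      ≤ ∑ x ∈ V, (c * (negMulLog (p (x₀ + x)) + negMulLog (p (x₀ - x)))
          - (p (x₀ + x) + p (x₀ - x))) := by
        rw [Finset.sum_sub_distrib, ← Finset.mul_sum, Finset.sum_add_distrib,
          Finset.sum_add_distrib]
        nlinarith [hp.1 x₀]
    _ ≤ ∑ x ∈ V, negMulLog (subDist p p x) := Finset.sum_le_sum hpoint
    _ ≤ ent (subDist p p) := (isPMF_subDist hp hp).sum_negMulLog_le_ent V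

universe u

/-- There is `δ₀ > 0` such that: if `X ~ p` is a random variable taking
values in a finite subset of an abelian group `G` and `x₀ ∈ G` satisfies
`P(X = x₀) ≥ 1 - δ₀`, then `H(X) ≤ 2 d_ent(X, X)`. -/
theorem statement13 :
    ∃ δ₀ : ℝ, 0 < δ₀ ∧
      ∀ (G : Type u) [AddCommGroup G] (p : G →₀ ℝ), IsPMF p →
        ∀ x₀ : G, 1 - δ₀ ≤ p x₀ → ent p ≤ 2 * dEnt p p := by
  refine ⟨exp (-16), exp_pos _, fun G _ p hp x₀ hx₀ => ?_⟩
  set δ := 1 - p x₀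
  have hδ₀ : 0 ≤ δ := sub_nonneg.2 (hp.le_one x₀)
  have hδ : δ ≤ exp (-16) := by linarith
  have hδ₁ : δ ≤ 1 / 17 := by
    have := add_one_le_exp (16 : ℝ)
    rw [exp_neg] at hδ
    exact hδ.trans (by rw [inv_le_comm₀ (exp_pos _) (by norm_num)]; norm_num; linarith)
  have h2δ : 2 * δ ≤ exp (-1) := by
    have h15 := add_one_le_exp (15 : ℝ)
    have : exp (-1) = exp 15 * exp (-16) := by rw [← exp_add]; norm_num
    nlinarith [exp_pos (-16)]
  have hS : 16 * δ ≤ ent p - negMulLog (p x₀) :=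
    (mul_le_negMulLog hδ₀ hδ).trans (hp.negMulLog_one_sub_le_ent_sub x₀)
  have he₀ : negMulLog (p x₀) ≤ δ := negMulLog_le_one_sub_self (hp.1 x₀)
  have hr := hp.le_ent_subDist_self x₀ h2δ
  rw [dEnt]
  nlinarith [mul_nonneg (by linarith : 0 ≤ ent p - negMulLog (p x₀) - 16 * δ)
    (by linarith : (0 : ℝ) ≤ 1 - 4 * δ), mul_nonneg hδ₀ (by linarith : 0 ≤ 1 / 17 - δ)]

end
end

section
/- Let D ≥ 0 and let X, Y be random variables taking values in finite subsets of Z^D. Denote by φ : Z^D → F₂^D the natural reduction-mod-2 homomorphism. Then H(φ(X)) ≤ 10 d_ent(X, Y) and H(φ(Y)) ≤ 10 d_ent(X, Y). -/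
open Finset

noncomputable section

/-!
Let `X, Y₁, Y₂` be independent, with `Y₁, Y₂` copies of `Y`. Since `φ` kills `2ℤ^D` and doubling
is injective on `ℤ^D`, conditioning on `X` gives `H(φ X) ≤ H(X - 2Y₁) - H(Y₁)`. Submodularity gives
`H(X - 2Y₁) ≤ H(X - Y₁ - Y₂) + H(Y₂ - Y₁) - H(Y₂)`, and both `H(X - Y₁ - Y₂)` (Kaimanovich–Vershik)
and `H(Y₂ - Y₁)` (Ruzsa triangle inequality) are at most `2 H(X - Y) - H(X)`. Summing,
`0 ≤ H(φ X) ≤ 4 d_ent(X, Y)`, so the factor `4` may be weakened to `10`; the bound for `Y` follows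
from the symmetry of `d_ent`. Every entropy inequality used is an instance of the
submodularity `H(A, B) + H(F B) ≤ H(A, F B) + H(B)`, which follows from Gibbs' inequality.
-/

open Finsupp Real

variable {α β γ δ Ω : Type*}

section Distributions

lemma IsPMF.nonneg {p : α →₀ ℝ} (hp : IsPMF p) : 0 ≤ p := fun x => hp.1 x

lemma mapDomain_apply_eq_sum_filter [DecidableEq β] (f : α → β) (v : α →₀ ℝ) (b : β) :
    v.mapDomain f b = ∑ z ∈ v.support with f z = b, v z := by
  simp [mapDomain, Finsupp.sum, single_apply, Finset.sum_filter]

lemma le_mapDomain_apply {v : α →₀ ℝ} (hv : 0 ≤ v) (f : α → β) (z : α) :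
    v z ≤ v.mapDomain f (f z) := by
  classical
  rcases eq_or_ne (v z) 0 with h | h
  · exact h ▸ mapDomain_nonneg hv (f z)
  · rw [mapDomain_apply_eq_sum]
    exact Finset.single_le_sum (fun i _ => hv i) (by simp [h])

lemma sum_support_mapDomain (f : α → β) (v : α →₀ ℝ) :
    ∑ b ∈ (v.mapDomain f).support, v.mapDomain f b = ∑ z ∈ v.support, v z :=
  sum_mapDomain_index (h := fun _ c => c) (fun _ => rfl) (fun _ _ _ => rfl)

lemma sum_le_sum_support {v : α →₀ ℝ} (hv : 0 ≤ v) (s : Finset α) :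
    ∑ x ∈ s, v x ≤ ∑ x ∈ v.support, v x := by
  rw [← Finset.sum_filter_ne_zero]
  exact Finset.sum_le_sum_of_subset_of_nonneg
    (fun x hx => mem_support_iff.2 (Finset.mem_filter.1 hx).2) fun x _ _ => hv x

lemma IsPMF.mapDomain {p : α →₀ ℝ} (hp : IsPMF p) (f : α → β) : IsPMF (p.mapDomain f) :=
  ⟨mapDomain_nonneg hp.nonneg, by rw [sum_support_mapDomain, hp.2]⟩

end Distributions

section Product

lemma prodPMF_apply (p : α →₀ ℝ) (q : β →₀ ℝ) (z : α × β) : prodPMF p q z = p z.1 * q z.2 := rfl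

lemma support_prodPMF (p : α →₀ ℝ) (q : β →₀ ℝ) :
    (prodPMF p q).support = p.support ×ˢ q.support := by
  ext z
  simp [prodPMF_apply, Finset.mem_product]

lemma sum_prodPMF (p : α →₀ ℝ) (q : β →₀ ℝ) (g : α × β → ℝ) :
    ∑ z ∈ (prodPMF p q).support, g z = ∑ a ∈ p.support, ∑ b ∈ q.support, g (a, b) := by
  rw [support_prodPMF, Finset.sum_product]

lemma IsPMF.prodPMF {p : α →₀ ℝ} {q : β →₀ ℝ} (hp : IsPMF p) (hq : IsPMF q) :
    IsPMF (prodPMF p q) := by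
  refine ⟨fun z => mul_nonneg (hp.1 z.1) (hq.1 z.2), ?_⟩
  simp only [sum_prodPMF, prodPMF_apply, ← Finset.mul_sum, ← Finset.sum_mul, hp.2, hq.2, one_mul]

lemma ent_prodPMF {p : α →₀ ℝ} {q : β →₀ ℝ} (hp : IsPMF p) (hq : IsPMF q) :
    ent (prodPMF p q) = ent p + ent q := by
  simp only [ent, sum_prodPMF, prodPMF_apply, negMulLog_mul, Finset.sum_add_distrib,
    ← Finset.mul_sum, ← Finset.sum_mul, hp.2, hq.2, one_mul]

lemma mapDomain_prodMap_prodPMF (f : α → γ) (g : β → δ) (p : α →₀ ℝ) (q : β →₀ ℝ) :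
    (prodPMF p q).mapDomain (Prod.map f g) = prodPMF (p.mapDomain f) (q.mapDomain g) := by
  classical
  ext ⟨c, d⟩
  simp only [mapDomain_apply_eq_sum_filter, prodPMF_apply, Finset.sum_mul_sum,
    ← Finset.sum_product', support_prodPMF, Prod.map, Prod.mk.injEq]
  rw [Finset.filter_product (fun a => f a = c) (fun b => g b = d)]

lemma mapDomain_fst_prodPMF (p : α →₀ ℝ) {q : β →₀ ℝ} (hq : IsPMF q) :
    (prodPMF p q).mapDomain Prod.fst = p := by
  classical
  ext a
  rw [mapDomain_apply_eq_sum_filter, support_prodPMF, Finset.filter_product_left (· = a),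
    Finset.sum_product]
  simp only [prodPMF_apply, ← Finset.mul_sum, hq.2, mul_one]
  simp [Finset.sum_filter, eq_comm]

lemma mapDomain_snd_prodPMF {p : α →₀ ℝ} (hp : IsPMF p) (q : β →₀ ℝ) :
    (prodPMF p q).mapDomain Prod.snd = q := by
  classical
  ext b
  rw [mapDomain_apply_eq_sum_filter, support_prodPMF, Finset.filter_product_right (· = b),
    Finset.sum_product_right]
  simp only [prodPMF_apply, ← Finset.sum_mul, hp.2, one_mul]
  simp [Finset.sum_filter, eq_comm]

lemma mapDomain_swap_prodPMF (p : α →₀ ℝ) (q : β →₀ ℝ) :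
    (prodPMF p q).mapDomain Prod.swap = prodPMF q p := by
  ext z
  rw [← Prod.swap_swap z, mapDomain_apply Prod.swap_injective, prodPMF_apply, prodPMF_apply,
    mul_comm]
  rfl

end Product

section Entropy

lemma ent_mapDomain (f : α → β) (v : α →₀ ℝ) :
    ent (v.mapDomain f) = ∑ z ∈ v.support, -v z * log (v.mapDomain f (f z)) := by
  classical
  rw [ent, Finset.sum_subset mapDomain_support fun b _ hb => by
    rw [notMem_support_iff.1 hb, negMulLog_zero]]
  refine Finset.sum_image' _ fun z _ => ?_
  rw [Finset.sum_congr rfl fun j hj => by rw [(Finset.mem_filter.1 hj).2], ← Finset.sum_mul,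
    Finset.sum_neg_distrib, negMulLog, mapDomain_apply_eq_sum]

lemma ent_nonneg {p : α →₀ ℝ} (hp : IsPMF p) : 0 ≤ ent p :=
  Finset.sum_nonneg fun x hx => negMulLog_nonneg (hp.1 x)
    (hp.2 ▸ Finset.single_le_sum (fun y _ => hp.1 y) hx)

lemma ent_mapDomain_le {v : α →₀ ℝ} (hv : 0 ≤ v) (f : α → β) :
    ent (v.mapDomain f) ≤ ent v := by
  rw [ent_mapDomain]
  refine Finset.sum_le_sum fun z hz => ?_
  have hz : 0 < v z := (hv z).lt_of_ne' (mem_support_iff.1 hz)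
  rw [negMulLog, neg_mul, neg_mul, neg_le_neg_iff]
  exact mul_le_mul_of_nonneg_left (log_le_log hz (le_mapDomain_apply hv f z)) hz.le

lemma ent_mapDomain_of_injective {f : α → β} (hf : Function.Injective f) (v : α →₀ ℝ) :
    ent (v.mapDomain f) = ent v := by
  simp only [ent_mapDomain, mapDomain_apply hf]
  rfl

lemma ent_mapDomain_const {v : α →₀ ℝ} (hv : IsPMF v) (b : β) :
    ent (v.mapDomain fun _ => b) = 0 := by
  classical
  have : v.mapDomain (fun _ => b) b = 1 := by
    rw [mapDomain_apply_eq_sum_filter, Finset.filter_true_of_mem fun _ _ => rfl, hv.2]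
  simp [ent_mapDomain, this]

end Entropy

section Submodularity

variable {W : (α × β) →₀ ℝ}

/-- The summand is the law of a pair `(A, B)` that is conditionally independent given `F B`, with
the same laws of `(A, F B)` and of `B` as under `W`; hence its total mass is at most one. -/
lemma sum_condIndep_le (hW : 0 ≤ W) (F : β → γ) :
    ∑ z ∈ W.support, W.mapDomain (Prod.map id F) (z.1, F z.2) * W.mapDomain Prod.snd z.2 /
      W.mapDomain (F ∘ Prod.snd) (F z.2) ≤ ∑ z ∈ W.support, W z := by
  classical
  set W' := W.mapDomain (Prod.map id F)
  set m := W.mapDomain Prod.snd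
  set m' := W.mapDomain (F ∘ Prod.snd)
  have hm' : m' = m.mapDomain F := mapDomain_comp
  have hm'_pos : ∀ b ∈ m.support, 0 < m' (F b) := fun b hb =>
    ((mapDomain_nonneg hW b).lt_of_ne' (mem_support_iff.1 hb)).trans_le
      (hm' ▸ le_mapDomain_apply (mapDomain_nonneg hW) F b)
  calc _ ≤ ∑ z ∈ W.support.image Prod.fst ×ˢ m.support,
        W' (z.1, F z.2) * m z.2 / m' (F z.2) := by
        refine Finset.sum_le_sum_of_subset_of_nonneg (fun z hz => Finset.mem_product.2
          ⟨Finset.mem_image_of_mem _ hz, mem_support_iff.2 ?_⟩) fun z _ _ => ?_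
        · exact ((hW z).lt_of_ne' (mem_support_iff.1 hz)).trans_le
            (le_mapDomain_apply hW Prod.snd z) |>.ne'
        · exact div_nonneg (mul_nonneg (mapDomain_nonneg hW _) (mapDomain_nonneg hW _))
            (mapDomain_nonneg hW _)
    _ = ∑ a ∈ W.support.image Prod.fst, ∑ c ∈ m.support.image F, W' (a, c) := by
        rw [Finset.sum_product]
        refine Finset.sum_congr rfl fun a _ => (Finset.sum_image' _ fun b hb => ?_).symm
        have hfiber : ∑ j ∈ m.support with F j = F b, m j = m' (F b) := by
          rw [hm', mapDomain_apply_eq_sum]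
        simp only [mul_div_right_comm _ (m _)]
        rw [Finset.sum_congr rfl fun j hj => by rw [(Finset.mem_filter.1 hj).2],
          ← Finset.mul_sum, hfiber, div_mul_cancel₀ _ (hm'_pos b hb).ne']
    _ ≤ ∑ z ∈ W'.support, W' z := by
        rw [← Finset.sum_product']
        exact sum_le_sum_support (mapDomain_nonneg hW) _
    _ = ∑ z ∈ W.support, W z := sum_support_mapDomain _ _

lemma ent_submodular (hW : 0 ≤ W) (F : β → γ) :
    ent W + ent (W.mapDomain (F ∘ Prod.snd)) ≤
      ent (W.mapDomain (Prod.map id F)) + ent (W.mapDomain Prod.snd) := by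
  rw [show ent W = ∑ z ∈ W.support, -W z * log (W z) from rfl, ent_mapDomain, ent_mapDomain,
    ent_mapDomain]
  simp only [Function.comp_apply, Prod.map_apply', id]
  have hcount := sum_condIndep_le hW F
  set W' := W.mapDomain (Prod.map id F)
  set m := W.mapDomain Prod.snd
  set m' := W.mapDomain (F ∘ Prod.snd)
  have gibbs : ∀ z ∈ W.support, (-W z * log (W z) + -W z * log (m' (F z.2))) -
      (-W z * log (W' (z.1, F z.2)) + -W z * log (m z.2)) ≤
        W' (z.1, F z.2) * m z.2 / m' (F z.2) - W z := by
    intro z hz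
    have h : 0 < W z := (hW z).lt_of_ne' (mem_support_iff.1 hz)
    have h' : 0 < W' (z.1, F z.2) := h.trans_le (le_mapDomain_apply hW _ z)
    have hm : 0 < m z.2 := h.trans_le (le_mapDomain_apply hW _ z)
    have hm' : 0 < m' (F z.2) := h.trans_le (le_mapDomain_apply hW _ z)
    have := mul_le_mul_of_nonneg_left (log_le_sub_one_of_pos
      (by positivity : 0 < W' (z.1, F z.2) * m z.2 / (W z * m' (F z.2)))) h.le
    rw [log_div (by positivity) (by positivity), log_mul h'.ne' hm.ne', log_mul h.ne' hm'.ne']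
      at this
    field_simp at this ⊢
    linarith
  have hsum := Finset.sum_le_sum gibbs
  simp only [Finset.sum_sub_distrib, Finset.sum_add_distrib] at hsum
  linarith

end Submodularity

section RandomVariables

/-- `H(f)` for the random variable `f` on the finite probability space `Ω` with law `w`. -/
def entOf (w : Ω →₀ ℝ) (f : Ω → α) : ℝ := ent (w.mapDomain f)

/-- Independence, expressed as additivity of entropy (vanishing mutual information). -/
def IndepEnt (w : Ω →₀ ℝ) (f : Ω → α) (g : Ω → β) : Prop :=
  entOf w (fun ω => (f ω, g ω)) = entOf w f + entOf w g

variable {w : Ω →₀ ℝ}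

lemma entOf_mapDomain (s : Ω → β) (f : β → α) :
    entOf (w.mapDomain s) f = entOf w (fun ω => f (s ω)) := by
  rw [entOf, entOf, ← mapDomain_comp]
  rfl

lemma entOf_comp_eq_of_mapDomain_eq {s : Ω → β} {v : β →₀ ℝ} (hs : w.mapDomain s = v)
    (f : β → α) : entOf w (fun ω => f (s ω)) = entOf v f := by
  rw [← hs, entOf_mapDomain]

lemma entOf_comp_le (hw : 0 ≤ w) (f : Ω → α) (φ : α → β) :
    entOf w (fun ω => φ (f ω)) ≤ entOf w f := by
  rw [← entOf_mapDomain]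
  exact ent_mapDomain_le (mapDomain_nonneg hw) φ

lemma entOf_comp_of_injective {φ : α → β} (hφ : Function.Injective φ) (f : Ω → α) :
    entOf w (fun ω => φ (f ω)) = entOf w f := by
  rw [← entOf_mapDomain]
  exact ent_mapDomain_of_injective hφ _

lemma entOf_congr (hw : 0 ≤ w) {f : Ω → α} {g : Ω → β} (φ : α → β) (ψ : β → α)
    (hg : ∀ ω, g ω = φ (f ω)) (hf : ∀ ω, f ω = ψ (g ω)) : entOf w f = entOf w g := by
  refine le_antisymm ?_ ?_
  · simpa only [← hf] using entOf_comp_le hw g ψ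
  · simpa only [← hg] using entOf_comp_le hw f φ

lemma entOf_submodular (hw : 0 ≤ w) (a : Ω → α) (b : Ω → β) (F : β → γ) :
    entOf w (fun ω => (a ω, b ω)) + entOf w (fun ω => F (b ω)) ≤
      entOf w (fun ω => (a ω, F (b ω))) + entOf w b := by
  have := ent_submodular (mapDomain_nonneg hw (f := fun ω => (a ω, b ω))) F
  rw [← mapDomain_comp, ← mapDomain_comp, ← mapDomain_comp] at this
  exact this

lemma entOf_pair_le (hw : IsPMF w) (a : Ω → α) (b : Ω → β) :
    entOf w (fun ω => (a ω, b ω)) ≤ entOf w a + entOf w b := by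
  have h := entOf_submodular hw.nonneg a b fun _ => ()
  have h0 : entOf w (fun _ => ()) = 0 := ent_mapDomain_const hw ()
  have h1 : entOf w (fun ω => (a ω, ())) = entOf w a :=
    entOf_comp_of_injective (φ := fun x : α => (x, ())) (fun _ _ h => congrArg Prod.fst h) a
  linarith

end RandomVariables

section Independence

variable {w : Ω →₀ ℝ} {f : Ω → α} {g : Ω → β}

lemma entOf_pair_comm (f : Ω → α) (g : Ω → β) :
    entOf w (fun ω => (g ω, f ω)) = entOf w (fun ω => (f ω, g ω)) :=
  entOf_comp_of_injective Prod.swap_injective (fun ω => (f ω, g ω))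

lemma entOf_pair_assoc (f : Ω → α) (g : Ω → β) (k : Ω → γ) :
    entOf w (fun ω => ((f ω, g ω), k ω)) = entOf w (fun ω => (f ω, (g ω, k ω))) :=
  (entOf_comp_of_injective (Equiv.prodAssoc α β γ).injective fun ω => ((f ω, g ω), k ω)).symm

lemma IndepEnt.of_mapDomain {s : Ω → γ} {f : γ → α} {g : γ → β}
    (h : IndepEnt (w.mapDomain s) f g) : IndepEnt w (fun ω => f (s ω)) (fun ω => g (s ω)) := by
  simpa only [IndepEnt, entOf_mapDomain] using h

lemma indepEnt_prodPMF {p : α →₀ ℝ} {q : β →₀ ℝ} (hp : IsPMF p) (hq : IsPMF q) :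
    IndepEnt (prodPMF p q) Prod.fst Prod.snd := by
  rw [IndepEnt, entOf, entOf, entOf, mapDomain_fst_prodPMF p hq,
    mapDomain_snd_prodPMF hp q]
  exact (congrArg ent mapDomain_id).trans (ent_prodPMF hp hq)

lemma IndepEnt.symm (h : IndepEnt w f g) : IndepEnt w g f := by
  rw [IndepEnt, entOf_pair_comm, h, add_comm]

lemma IndepEnt.comp_left (hw : IsPMF w) (h : IndepEnt w f g) (φ : α → γ) :
    IndepEnt w (fun ω => φ (f ω)) g := by
  refine le_antisymm (entOf_pair_le hw _ _) ?_
  have := entOf_submodular hw.nonneg g f φ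
  rw [entOf_pair_comm, h, entOf_pair_comm] at this
  linarith

lemma IndepEnt.comp_right (hw : IsPMF w) (h : IndepEnt w f g) (φ : β → γ) :
    IndepEnt w f (fun ω => φ (g ω)) :=
  (h.symm.comp_left hw φ).symm

lemma IndepEnt.pair_left (hw : IsPMF w) {k : Ω → γ} (h₁ : IndepEnt w f (fun ω => (g ω, k ω)))
    (h₂ : IndepEnt w g k) : IndepEnt w (fun ω => (f ω, g ω)) k := by
  refine le_antisymm (entOf_pair_le hw _ _) ?_
  have := entOf_pair_le hw f g
  rw [entOf_pair_assoc, h₁, h₂]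
  linarith

end Independence

section SumsetInequalities

variable {G H : Type*} [AddCommGroup G] {w : Ω →₀ ℝ} {x y z : Ω → G}

lemma entOf_comp_add_entOf_le (hw : IsPMF w) (h : IndepEnt w x y) {ρ : G → H}
    (hρ : ∀ a b, ρ (a - (b + b)) = ρ a) (hdouble : Function.Injective fun g : G => g + g) :
    entOf w (fun ω => ρ (x ω)) + entOf w y ≤ entOf w (fun ω => x ω - (y ω + y ω)) := by
  have hsub := entOf_submodular hw.nonneg (fun ω => x ω - (y ω + y ω)) x ρ
  have hρx : entOf w (fun ω => (x ω - (y ω + y ω), ρ (x ω))) =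
      entOf w (fun ω => x ω - (y ω + y ω)) :=
    (entOf_congr hw.nonneg (fun s => (s, ρ s)) Prod.fst (fun _ => by rw [hρ]) fun _ => rfl).symm
  have hshear : entOf w (fun ω => (x ω - (y ω + y ω), x ω)) =
      entOf w (fun ω => (y ω + y ω, x ω)) :=
    entOf_congr hw.nonneg (fun p => (p.2 - p.1, p.2)) (fun p => (p.2 - p.1, p.2))
      (fun _ => by simp) (fun _ => by simp)
  have hdouble' : entOf w (fun ω => (y ω + y ω, x ω)) = entOf w (fun ω => (y ω, x ω)) :=
    entOf_comp_of_injective (φ := Prod.map (fun g : G => g + g) id)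
      (hdouble.prodMap Function.injective_id) fun ω => (y ω, x ω)
  rw [hρx, hshear, hdouble', h.symm] at hsub
  linarith

lemma entOf_sub_double_add_entOf_le (hw : IsPMF w) (h : IndepEnt w (fun ω => (x ω, y ω)) z) :
    entOf w (fun ω => x ω - (y ω + y ω)) + entOf w z ≤
      entOf w (fun ω => x ω - y ω - z ω) + entOf w (fun ω => z ω - y ω) := by
  have hsub := entOf_submodular hw.nonneg (fun ω => z ω - y ω) (fun ω => (x ω, y ω))
    fun p => p.1 - (p.2 + p.2)
  have hjoint : entOf w (fun ω => (z ω - y ω, (x ω, y ω))) =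
      entOf w (fun ω => ((x ω, y ω), z ω)) :=
    entOf_congr hw.nonneg (fun p => (p.2, p.1 + p.2.2)) (fun p => (p.2 - p.1.2, p.1))
      (fun _ => by simp) (fun _ => by simp)
  have hshear : entOf w (fun ω => (z ω - y ω, x ω - (y ω + y ω))) =
      entOf w (fun ω => (z ω - y ω, x ω - y ω - z ω)) :=
    entOf_congr hw.nonneg (fun p => (p.1, p.2 - p.1)) (fun p => (p.1, p.2 + p.1))
      (fun _ => by ext <;> simp; abel) (fun _ => by ext <;> simp; abel)
  have := entOf_pair_le hw (fun ω => z ω - y ω) (fun ω => x ω - y ω - z ω)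
  rw [hjoint, h, hshear] at hsub
  linarith

lemma entOf_sub_sub_add_entOf_le (hw : IsPMF w) (h₁ : IndepEnt w x (fun ω => (y ω, z ω)))
    (h₂ : IndepEnt w y z) :
    entOf w (fun ω => x ω - y ω - z ω) + entOf w x ≤
      entOf w (fun ω => x ω - y ω) + entOf w (fun ω => x ω - z ω) := by
  have hxy_z := h₁.pair_left hw h₂
  have hxz_y := (h₁.comp_right hw Prod.swap).pair_left hw h₂.symm
  have hsub := entOf_submodular hw.nonneg (fun ω => x ω - z ω)
    (fun ω => (x ω - y ω - z ω, z ω)) Prod.fst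
  have hjoint : entOf w (fun ω => (x ω - z ω, (x ω - y ω - z ω, z ω))) =
      entOf w (fun ω => ((x ω, y ω), z ω)) :=
    entOf_congr hw.nonneg (fun p => ((p.1 + p.2.2, p.1 - p.2.1), p.2.2))
      (fun p => (p.1.1 - p.2, (p.1.1 - p.1.2 - p.2, p.2))) (fun _ => by ext <;> simp)
      (fun _ => by simp)
  have hleft : entOf w (fun ω => (x ω - z ω, x ω - y ω - z ω)) =
      entOf w (fun ω => (x ω - z ω, y ω)) :=
    entOf_congr hw.nonneg (fun p => (p.1, p.1 - p.2)) (fun p => (p.1, p.1 - p.2))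
      (fun _ => by ext <;> simp) (fun _ => by ext <;> simp; abel)
  have hright : entOf w (fun ω => (x ω - y ω - z ω, z ω)) =
      entOf w (fun ω => (x ω - y ω, z ω)) :=
    entOf_congr hw.nonneg (fun p => (p.1 + p.2, p.2)) (fun p => (p.1 - p.2, p.2))
      (fun _ => by simp) (fun _ => by simp)
  rw [hjoint, hxy_z, h₁.comp_right hw Prod.fst, hleft, hxz_y.comp_left hw fun p => p.1 - p.2,
    hright, hxy_z.comp_left hw fun p => p.1 - p.2] at hsub
  linarith

lemma entOf_sub_add_entOf_le (hw : IsPMF w) (h : IndepEnt w x (fun ω => (y ω, z ω))) :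
    entOf w (fun ω => z ω - y ω) + entOf w x ≤
      entOf w (fun ω => x ω - y ω) + entOf w (fun ω => x ω - z ω) := by
  have hsub := entOf_submodular hw.nonneg (fun ω => z ω - x ω) (fun ω => (y ω, z ω))
    fun p => p.2 - p.1
  have hjoint : entOf w (fun ω => (z ω - x ω, (y ω, z ω))) =
      entOf w (fun ω => (x ω, (y ω, z ω))) :=
    entOf_congr hw.nonneg (fun p => (p.2.2 - p.1, p.2)) (fun p => (p.2.2 - p.1, p.2))
      (fun _ => by simp) (fun _ => by simp)
  have hshear : entOf w (fun ω => (z ω - x ω, z ω - y ω)) =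
      entOf w (fun ω => (z ω - x ω, x ω - y ω)) :=
    entOf_congr hw.nonneg (fun p => (p.1, p.2 - p.1)) (fun p => (p.1, p.2 + p.1))
      (fun _ => by ext <;> simp) (fun _ => by ext <;> simp)
  have hneg : entOf w (fun ω => z ω - x ω) = entOf w (fun ω => x ω - z ω) :=
    entOf_congr hw.nonneg Neg.neg Neg.neg (fun _ => by simp) (fun _ => by simp)
  have := entOf_pair_le hw (fun ω => z ω - x ω) (fun ω => x ω - y ω)
  rw [hjoint, h, hshear] at hsub
  linarith

lemma entOf_comp_add_le (hw : IsPMF w) (h₁ : IndepEnt w x (fun ω => (y ω, z ω)))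
    (h₂ : IndepEnt w y z) {ρ : G → H} (hρ : ∀ a b, ρ (a - (b + b)) = ρ a)
    (hdouble : Function.Injective fun g : G => g + g) :
    entOf w (fun ω => ρ (x ω)) + entOf w y + entOf w z + 2 * entOf w x ≤
      2 * (entOf w (fun ω => x ω - y ω) + entOf w (fun ω => x ω - z ω)) := by
  have := entOf_comp_add_entOf_le hw (h₁.comp_right hw Prod.fst) hρ hdouble
  have := entOf_sub_double_add_entOf_le hw (h₁.pair_left hw h₂)
  have := entOf_sub_sub_add_entOf_le hw h₁ h₂
  have := entOf_sub_add_entOf_le hw h₁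
  linarith

end SumsetInequalities

section RuzsaDistance

variable {G H : Type*} [AddCommGroup G]

lemma ent_subDist_comm (p q : G →₀ ℝ) : ent (subDist q p) = ent (subDist p q) := by
  have hneg : (fun z : G × G => z.1 - z.2) ∘ Prod.swap = Neg.neg ∘ fun z => z.1 - z.2 := by
    funext z
    exact (neg_sub _ _).symm
  rw [subDist, ← mapDomain_swap_prodPMF, ← mapDomain_comp, hneg, mapDomain_comp,
    ent_mapDomain_of_injective neg_injective]
  rfl

lemma dEnt_comm (p q : G →₀ ℝ) : dEnt q p = dEnt p q := by
  rw [dEnt, dEnt, ent_subDist_comm]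
  ring

lemma ent_mapDomain_le_four_mul_dEnt {p q : G →₀ ℝ} (hp : IsPMF p) (hq : IsPMF q) {ρ : G → H}
    (hρ : ∀ a b, ρ (a - (b + b)) = ρ a) (hdouble : Function.Injective fun g : G => g + g) :
    ent (p.mapDomain ρ) ≤ 4 * dEnt p q := by
  set w := prodPMF p (prodPMF q q)
  have hx : w.mapDomain Prod.fst = p := mapDomain_fst_prodPMF p (hq.prodPMF hq)
  have hyz : w.mapDomain Prod.snd = prodPMF q q := mapDomain_snd_prodPMF hp _
  have hxy : w.mapDomain (Prod.map id Prod.fst) = prodPMF p q := by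
    rw [mapDomain_prodMap_prodPMF, mapDomain_id, mapDomain_fst_prodPMF q hq]
  have hxz : w.mapDomain (Prod.map id Prod.snd) = prodPMF p q := by
    rw [mapDomain_prodMap_prodPMF, mapDomain_id, mapDomain_snd_prodPMF hq q]
  have h₁ : IndepEnt w Prod.fst (fun ω => (ω.2.1, ω.2.2)) := indepEnt_prodPMF hp (hq.prodPMF hq)
  have h₂ : IndepEnt w (fun ω => ω.2.1) (fun ω => ω.2.2) := by
    have := indepEnt_prodPMF hq hq
    rw [← hyz] at this
    exact this.of_mapDomain
  have key := entOf_comp_add_le (hp.prodPMF (hq.prodPMF hq)) h₁ h₂ hρ hdouble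
  have hρx : entOf w (fun ω => ρ ω.1) = ent (p.mapDomain ρ) :=
    entOf_comp_eq_of_mapDomain_eq hx ρ
  have hx' : entOf w Prod.fst = ent p := congrArg ent hx
  have hy : entOf w (fun ω => ω.2.1) = ent q :=
    (entOf_comp_eq_of_mapDomain_eq hyz Prod.fst).trans
      (congrArg ent (mapDomain_fst_prodPMF q hq))
  have hz : entOf w (fun ω => ω.2.2) = ent q :=
    (entOf_comp_eq_of_mapDomain_eq hyz Prod.snd).trans
      (congrArg ent (mapDomain_snd_prodPMF hq q))
  have hxy' : entOf w (fun ω => ω.1 - ω.2.1) = ent (subDist p q) :=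
    entOf_comp_eq_of_mapDomain_eq hxy fun z => z.1 - z.2
  have hxz' : entOf w (fun ω => ω.1 - ω.2.2) = ent (subDist p q) :=
    entOf_comp_eq_of_mapDomain_eq hxz fun z => z.1 - z.2
  rw [hρx, hx', hy, hz, hxy', hxz'] at key
  rw [dEnt]
  linarith

end RuzsaDistance

/-- Let `X ~ p`, `Y ~ q` be random variables taking values in finite
subsets of `ℤ^D`, and let `φ : ℤ^D → F₂^D` be coordinatewise reduction mod `2`. Then
`H(φ(X)) ≤ 10 d_ent(X, Y)` and `H(φ(Y)) ≤ 10 d_ent(X, Y)`. -/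
theorem statement17 (D : ℕ) (p q : (Fin D → ℤ) →₀ ℝ) (hp : IsPMF p) (hq : IsPMF q) :
    ent (Finsupp.mapDomain (fun v : Fin D → ℤ => fun i => ((v i : ℤ) : ZMod 2)) p) ≤
        10 * dEnt p q ∧
    ent (Finsupp.mapDomain (fun v : Fin D → ℤ => fun i => ((v i : ℤ) : ZMod 2)) q) ≤
        10 * dEnt p q := by
  set ρ := fun v : Fin D → ℤ => fun i => ((v i : ℤ) : ZMod 2)
  have hρ : ∀ a b, ρ (a - (b + b)) = ρ a := fun a b =>
    funext fun i => by simp [ρ, CharTwo.add_self_eq_zero]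
  have hdouble : Function.Injective fun g : Fin D → ℤ => g + g := fun a b h =>
    funext fun i => by have := congrFun h i; simp only [Pi.add_apply] at this; omega
  have hp₄ := ent_mapDomain_le_four_mul_dEnt hp hq hρ hdouble
  have hq₄ := ent_mapDomain_le_four_mul_dEnt hq hp hρ hdouble
  rw [dEnt_comm] at hq₄
  have := ent_nonneg (hp.mapDomain ρ)
  constructor <;> linarith

end
end
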